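/- arXiv:1903.01515 — 6 statements merged into one kernel-verified Lean document; each statement's English description precedes it below -/
import Mathlib

section
/- The almost contact structure (φ, ξ, η) on 𝒩³_ε is normal: for all smooth vector fields X, Y : ℝ³ → ℝ³, N_φ(X,Y) + (X(η(Y)) − Y(η(X)) − η([X,Y]))·ξ = 0 identically on ℝ³, where N_φ(X,Y) = [φX, φY] − φ[φX, Y] − φ[X, φY] + φ(φ([X,Y])). -/
noncomputable section

/-- Points and tangent vectors of ℝ³, written as triples `(x, y, z)`. -/
abbrev R3 : Type := ℝ × ℝ × ℝ

/-- The contact form `η` on `𝒩³_ε` : `η_p(v) = 2y·v₁ + v₃`. -/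
def etaN (p v : R3) : ℝ := 2 * p.2.1 * v.1 + v.2.2

/-- The Reeb vector field `ξ = (0,0,1)`. -/
def xiN : R3 := (0, 0, 1)

/-- The `(1,1)`-tensor field `φ` : `φ_p(v) = (−v₂, v₁, 2y·v₂)`. -/
def phiN (p v : R3) : R3 := (-v.2.1, v.1, 2 * p.2.1 * v.2.1)

/-- The pseudo-metric `g_p(u,v) = e^{2z}(u₁v₁ + u₂v₂) + ε·η_p(u)·η_p(v)` on `𝒩³_ε`. -/
def gN (ε : ℝ) (p u v : R3) : ℝ :=
  Real.exp (2 * p.2.2) * (u.1 * v.1 + u.2.1 * v.2.1) + ε * etaN p u * etaN p v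

/-- The Lie bracket `[X,Y] = DY·X − DX·Y` of vector fields on ℝ³. -/
def bracket (X Y : R3 → R3) : R3 → R3 := fun p => fderiv ℝ Y p (X p) - fderiv ℝ X p (Y p)

/-- The vector field `φX : p ↦ φ_p(X(p))`. -/
def phiVF (X : R3 → R3) : R3 → R3 := fun p => phiN p (X p)

/-- The Nijenhuis torsion `N_φ(X,Y) = [φX, φY] − φ[φX, Y] − φ[X, φY] + φ(φ([X,Y]))`. -/
def nijenhuisN (X Y : R3 → R3) : R3 → R3 := fun p =>
  bracket (phiVF X) (phiVF Y) p - phiVF (bracket (phiVF X) Y) p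
    - phiVF (bracket X (phiVF Y)) p + phiN p (phiN p (bracket X Y p))

lemma phi_deriv (X : R3 → R3) (A : R3 →L[ℝ] R3) (p : R3) (h : HasFDerivAt X A p) :
    ∃ L : R3 →L[ℝ] R3, HasFDerivAt (phiVF X) L p ∧
      ∀ v, L v = (-(A v).2.1, ((A v).1,
        2 * v.2.1 * (X p).2.1 + 2 * p.2.1 * (A v).2.1)) := by
  have hq : HasFDerivAt (fun q : R3 => q.2.1)
      ((ContinuousLinearMap.fst ℝ ℝ ℝ).comp
        ((ContinuousLinearMap.snd ℝ ℝ (ℝ × ℝ)).comp (ContinuousLinearMap.id ℝ R3))) p :=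
    (hasFDerivAt_id p).snd.fst
  have h3 := (hq.mul h.snd.fst).const_mul 2
  refine ⟨_, HasFDerivAt.congr_of_eventuallyEq ((h.snd.fst.neg).prodMk (h.fst.prodMk h3)) ?_,
    fun v => ?_⟩
  · filter_upwards with q
    simp [phiVF, phiN, mul_assoc]
  · simp
    ring

lemma eta_deriv (Y : R3 → R3) (B : R3 →L[ℝ] R3) (p : R3) (h : HasFDerivAt Y B p) :
    ∃ L : R3 →L[ℝ] ℝ, HasFDerivAt (fun q => etaN q (Y q)) L p ∧
      ∀ v, L v = 2 * v.2.1 * (Y p).1 + 2 * p.2.1 * (B v).1 + (B v).2.2 := by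
  have hq : HasFDerivAt (fun q : R3 => q.2.1)
      ((ContinuousLinearMap.fst ℝ ℝ ℝ).comp
        ((ContinuousLinearMap.snd ℝ ℝ (ℝ × ℝ)).comp (ContinuousLinearMap.id ℝ R3))) p :=
    (hasFDerivAt_id p).snd.fst
  have h1 := (hq.mul h.fst).const_mul 2
  refine ⟨_, HasFDerivAt.congr_of_eventuallyEq (h1.add h.snd.snd) ?_, fun v => ?_⟩
  · filter_upwards with q
    simp [etaN, mul_assoc]
  · simp
    ring

/-- the almost contact structure `(φ, ξ, η)` on `𝒩³_ε` is normal: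
`N_φ(X,Y) + (X(η(Y)) − Y(η(X)) − η([X,Y]))·ξ = 0` for all smooth vector fields `X, Y`. -/
theorem normality_of_N (X Y : R3 → R3)
    (hX : ContDiff ℝ (⊤ : ℕ∞) X) (hY : ContDiff ℝ (⊤ : ℕ∞) Y) (p : R3) :
    nijenhuisN X Y p +
      (fderiv ℝ (fun q => etaN q (Y q)) p (X p) - fderiv ℝ (fun q => etaN q (X q)) p (Y p)
        - etaN p (bracket X Y p)) • xiN = 0 := by
  have hA : HasFDerivAt X (fderiv ℝ X p) p := (hX.differentiable (by simp) p).hasFDerivAt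
  have hB : HasFDerivAt Y (fderiv ℝ Y p) p := (hY.differentiable (by simp) p).hasFDerivAt
  set A := fderiv ℝ X p with hAe
  set B := fderiv ℝ Y p with hBe
  obtain ⟨LX, hLX, hLXv⟩ := phi_deriv X A p hA
  obtain ⟨LY, hLY, hLYv⟩ := phi_deriv Y B p hB
  obtain ⟨EX, hEX, hEXv⟩ := eta_deriv X A p hA
  obtain ⟨EY, hEY, hEYv⟩ := eta_deriv Y B p hB
  have e1 : fderiv ℝ (phiVF X) p = LX := hLX.fderiv
  have e2 : fderiv ℝ (phiVF Y) p = LY := hLY.fderiv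
  have e3 : fderiv ℝ (fun q => etaN q (X q)) p = EX := hEX.fderiv
  have e4 : fderiv ℝ (fun q => etaN q (Y q)) p = EY := hEY.fderiv
  simp only [nijenhuisN, bracket, e1, e2, e3, e4, phiVF]
  simp only [hLXv, hLYv, hEXv, hEYv, phiN, etaN, xiN]
  simp only [Prod.mk_sub_mk, Prod.mk_add_mk, Prod.smul_mk, Prod.ext_iff,
    ContinuousLinearMap.map_sub, Prod.fst_sub, Prod.snd_sub, smul_eq_mul, Prod.mk_eq_zero]
  simp only [← hAe, ← hBe]
  refine ⟨?_, ?_, ?_⟩ <;> · show _ = (0:ℝ); ring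
end
end

section
/- The Levi-Civita connection ∇ of the pseudo-metric g on 𝒩³_ε satisfies: ∇_{∂₁}∂₁ = 2y∂₁ − 4εy e^{−2z}∂₂ − ε(4εy² + e^{2z})∂₃; ∇_{∂₁}∂₂ = ∇_{∂₂}∂₁ = 2εy e^{−2z}∂₁ + (−4εy² + e^{2z})e^{−2z}∂₃; ∇_{∂₁}∂₃ = ∇_{∂₃}∂₁ = ∂₁ − ε e^{−2z}∂₂ − 2y∂₃; ∇_{∂₂}∂₂ = 2y∂₁ − ε(4εy² + e^{2z})∂₃; ∇_{∂₂}∂₃ = ∇_{∂₃}∂₂ = ε e^{−2z}∂₁ + ∂₂ − 2εy e^{−2z}∂₃; and ∇_{∂₃}∂₃ = 0; that is, the connection defined by these formulas is torsion-free and metric-compatible with g. -/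
noncomputable section

/-- The value `∇_{∂₁}∂₁ = 2y∂₁ − 4εy e^{−2z}∂₂ − ε(4εy² + e^{2z})∂₃`. -/
def GN11 (ε : ℝ) (p : R3) : R3 :=
  (2 * p.2.1, -4 * ε * p.2.1 * Real.exp (-2 * p.2.2),
    -ε * (4 * ε * p.2.1 ^ 2 + Real.exp (2 * p.2.2)))

/-- The value `∇_{∂₁}∂₂ = ∇_{∂₂}∂₁ = 2εy e^{−2z}∂₁ + (−4εy² + e^{2z})e^{−2z}∂₃`. -/
def GN12 (ε : ℝ) (p : R3) : R3 :=
  (2 * ε * p.2.1 * Real.exp (-2 * p.2.2), 0,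
    (-4 * ε * p.2.1 ^ 2 + Real.exp (2 * p.2.2)) * Real.exp (-2 * p.2.2))

/-- The value `∇_{∂₁}∂₃ = ∇_{∂₃}∂₁ = ∂₁ − ε e^{−2z}∂₂ − 2y∂₃`. -/
def GN13 (ε : ℝ) (p : R3) : R3 :=
  (1, -ε * Real.exp (-2 * p.2.2), -2 * p.2.1)

/-- The value `∇_{∂₂}∂₂ = 2y∂₁ − ε(4εy² + e^{2z})∂₃`. -/
def GN22 (ε : ℝ) (p : R3) : R3 :=
  (2 * p.2.1, 0, -ε * (4 * ε * p.2.1 ^ 2 + Real.exp (2 * p.2.2)))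

/-- The value `∇_{∂₂}∂₃ = ∇_{∂₃}∂₂ = ε e^{−2z}∂₁ + ∂₂ − 2εy e^{−2z}∂₃`. -/
def GN23 (ε : ℝ) (p : R3) : R3 :=
  (ε * Real.exp (-2 * p.2.2), 1, -2 * ε * p.2.1 * Real.exp (-2 * p.2.2))

/-- The Christoffel field `Γ` on `𝒩³_ε` obtained by extending the values
`∇_{∂ᵢ}∂ⱼ` above bilinearly and symmetrically (with `∇_{∂₃}∂₃ = 0`). -/
def GammaN (ε : ℝ) (p u v : R3) : R3 :=
  (u.1 * v.1) • GN11 ε p + (u.1 * v.2.1 + u.2.1 * v.1) • GN12 ε p +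
    (u.1 * v.2.2 + u.2.2 * v.1) • GN13 ε p + (u.2.1 * v.2.1) • GN22 ε p +
    (u.2.1 * v.2.2 + u.2.2 * v.2.1) • GN23 ε p

/-- the connection `∇_X Y = DY·X + Γ(X,Y)` given by the listed formulas for
`∇_{∂ᵢ}∂ⱼ` is torsion-free and metric-compatible, hence is the Levi-Civita connection of `g`. -/
theorem levi_civita_connection_of_N (ε : ℝ) (hε : ε = 1 ∨ ε = -1) :
    (∀ p : R3,
      GammaN ε p (1, 0, 0) (1, 0, 0) = GN11 ε p ∧
      GammaN ε p (1, 0, 0) (0, 1, 0) = GN12 ε p ∧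
      GammaN ε p (0, 1, 0) (1, 0, 0) = GN12 ε p ∧
      GammaN ε p (1, 0, 0) (0, 0, 1) = GN13 ε p ∧
      GammaN ε p (0, 0, 1) (1, 0, 0) = GN13 ε p ∧
      GammaN ε p (0, 1, 0) (0, 1, 0) = GN22 ε p ∧
      GammaN ε p (0, 1, 0) (0, 0, 1) = GN23 ε p ∧
      GammaN ε p (0, 0, 1) (0, 1, 0) = GN23 ε p ∧
      GammaN ε p (0, 0, 1) (0, 0, 1) = 0) ∧
    (∀ p u v : R3, GammaN ε p u v = GammaN ε p v u) ∧
    (∀ X Y Z : R3 → R3, ContDiff ℝ (⊤ : ℕ∞) X → ContDiff ℝ (⊤ : ℕ∞) Y → ContDiff ℝ (⊤ : ℕ∞) Z →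
      ∀ p : R3, fderiv ℝ (fun q => gN ε q (Y q) (Z q)) p (X p) =
        gN ε p (fderiv ℝ Y p (X p) + GammaN ε p (X p) (Y p)) (Z p) +
        gN ε p (Y p) (fderiv ℝ Z p (X p) + GammaN ε p (X p) (Z p))) := by
  refine ⟨?_, ?_, ?_⟩
  · intro p
    refine ⟨?_, ?_, ?_, ?_, ?_, ?_, ?_, ?_, ?_⟩ <;>
      simp [GammaN, GN11, GN12, GN13, GN22, GN23, Prod.ext_iff, Prod.smul_mk,
        Prod.mk_add_mk, smul_eq_mul]
  · intro p u v
    simp only [GammaN]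
    module
  · intro X Y Z hX hY hZ p
    have hYd : HasFDerivAt Y (fderiv ℝ Y p) p :=
      ((hY.differentiable (by simp)) p).hasFDerivAt
    have hZd : HasFDerivAt Z (fderiv ℝ Z p) p :=
      ((hZ.differentiable (by simp)) p).hasFDerivAt
    have hy1 := hYd.fst
    have hy2 := hYd.snd.fst
    have hy3 := hYd.snd.snd
    have hz1 := hZd.fst
    have hz2 := hZd.snd.fst
    have hz3 := hZd.snd.snd
    have hid : HasFDerivAt (fun q : R3 => q) (ContinuousLinearMap.id ℝ R3) p := hasFDerivAt_id p
    have hq2 := hid.snd.fst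
    have hq3 := hid.snd.snd
    have hexp := (hq3.const_mul (2:ℝ)).exp
    have hF := (hexp.mul ((hy1.mul hz1).add (hy2.mul hz2))).add
      (((((hq2.const_mul (2:ℝ)).mul hy1).add hy3).const_mul ε).mul
        (((hq2.const_mul (2:ℝ)).mul hz1).add hz3))
    have hfun : (fun q => gN ε q (Y q) (Z q)) =
        (fun q : R3 => Real.exp (2 * q.2.2) * ((Y q).1 * (Z q).1 + (Y q).2.1 * (Z q).2.1)
          + (ε * (2 * q.2.1 * (Y q).1 + (Y q).2.2)) * (2 * q.2.1 * (Z q).1 + (Z q).2.2)) := by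
      funext q
      simp only [gN, etaN]
    rw [hfun, (show HasFDerivAt (fun q : R3 => Real.exp (2 * q.2.2) * ((Y q).1 * (Z q).1 + (Y q).2.1 * (Z q).2.1)
          + (ε * (2 * q.2.1 * (Y q).1 + (Y q).2.2)) * (2 * q.2.1 * (Z q).1 + (Z q).2.2)) _ p from hF).fderiv]
    simp only [ContinuousLinearMap.add_apply, ContinuousLinearMap.smul_apply,
      ContinuousLinearMap.comp_apply, ContinuousLinearMap.coe_fst', ContinuousLinearMap.coe_snd',
      ContinuousLinearMap.id_apply, smul_eq_mul, gN, etaN, GammaN, GN11, GN12, GN13, GN22, GN23,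
      Prod.fst_add, Prod.snd_add, Prod.smul_mk, Prod.mk_add_mk, Prod.smul_fst, Prod.smul_snd, Pi.mul_apply, Pi.add_apply]
    have hinv : Real.exp (-2 * p.2.2) = (Real.exp (2 * p.2.2))⁻¹ := by
      rw [← Real.exp_neg]; ring_nf
    rcases hε with h | h <;> subst h <;> rw [hinv] <;>
      field_simp <;> ring
end
end

section
/- On 𝒩³_ε, for every smooth vector field X one has ∇_X ξ = −ε e^{−2z} φ(X) + X − η(X)·ξ; that is, the normality identity ∇_X ξ = −εα·φX + εβ·(X − η(X)ξ) holds with the structure functions α = e^{−2z} and β = ε. -/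
noncomputable section

open ContinuousLinearMap in
lemma gN_fderiv (ε : ℝ) (u w p d : R3) :
    fderiv ℝ (fun q => gN ε q u w) p d =
      2 * d.2.2 * Real.exp (2 * p.2.2) * (u.1 * w.1 + u.2.1 * w.2.1)
      + ε * (2 * d.2.1 * u.1 * etaN p w + 2 * d.2.1 * w.1 * etaN p u) := by
  have h21 : HasFDerivAt (fun q : R3 => q.2.1)
      ((fst ℝ ℝ ℝ).comp (snd ℝ ℝ (ℝ × ℝ))) p :=
    ((fst ℝ ℝ ℝ).comp (snd ℝ ℝ (ℝ × ℝ))).hasFDerivAt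
  have h22 : HasFDerivAt (fun q : R3 => q.2.2)
      ((snd ℝ ℝ ℝ).comp (snd ℝ ℝ (ℝ × ℝ))) p :=
    ((snd ℝ ℝ ℝ).comp (snd ℝ ℝ (ℝ × ℝ))).hasFDerivAt
  have hexp := ((h22.const_mul (2:ℝ)).exp).mul_const (u.1 * w.1 + u.2.1 * w.2.1)
  have hηu := ((h21.const_mul (2:ℝ)).mul_const u.1).add_const u.2.2
  have hηw := ((h21.const_mul (2:ℝ)).mul_const w.1).add_const w.2.2
  have htot := hexp.add (((hηu.const_mul ε).mul hηw))
  have : fderiv ℝ (fun q => gN ε q u w) p = _ := htot.fderiv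
  rw [this]
  simp [etaN]
  ring

lemma gN_symm (ε : ℝ) (p u v : R3) : gN ε p u v = gN ε p v u := by
  unfold gN; ring


/-- on `𝒩³_ε`, `∇_X ξ = −ε e^{−2z} φ(X) + X − η(X)·ξ`,
i.e. the normality identity holds with `α = e^{−2z}` and `β = ε`.  Here `∇` is the
Levi-Civita connection of `g`, i.e. the unique torsion-free metric connection
`∇_X Y = DY·X + Γ(X,Y)`. -/
theorem nabla_xi_on_N (ε : ℝ) (hε : ε = 1 ∨ ε = -1)
    (Γ : R3 → R3 →ₗ[ℝ] R3 →ₗ[ℝ] R3)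
    (hΓsmooth : ∀ u v : R3, ContDiff ℝ (⊤ : ℕ∞) fun p => Γ p u v)
    (hΓsymm : ∀ p u v : R3, Γ p u v = Γ p v u)
    (hΓmetric : ∀ X Y Z : R3 → R3, ContDiff ℝ (⊤ : ℕ∞) X → ContDiff ℝ (⊤ : ℕ∞) Y → ContDiff ℝ (⊤ : ℕ∞) Z →
      ∀ p : R3, fderiv ℝ (fun q => gN ε q (Y q) (Z q)) p (X p) =
        gN ε p (fderiv ℝ Y p (X p) + Γ p (X p) (Y p)) (Z p) +
        gN ε p (Y p) (fderiv ℝ Z p (X p) + Γ p (X p) (Z p)))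
    (X : R3 → R3) (hX : ContDiff ℝ (⊤ : ℕ∞) X) (p : R3) :
    fderiv ℝ (fun _ : R3 => xiN) p (X p) + Γ p (X p) xiN =
      (-(ε * Real.exp (-2 * p.2.2))) • phiN p (X p) + X p - etaN p (X p) • xiN := by
  have hε0 : ε ≠ 0 := by rcases hε with h | h <;> rw [h] <;> norm_num
  have hE : Real.exp (2 * p.2.2) ≠ 0 := (Real.exp_pos _).ne'
  set v := X p with hv
  have key : ∀ u : R3, 2 * gN ε p (Γ p v xiN) u =
      fderiv ℝ (fun q => gN ε q xiN u) p v
      + fderiv ℝ (fun q => gN ε q v u) p xiN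
      - fderiv ℝ (fun q => gN ε q v xiN) p u := by
    intro u
    have hA := hΓmetric (fun _ => v) (fun _ => xiN) (fun _ => u)
      contDiff_const contDiff_const contDiff_const p
    have hB := hΓmetric (fun _ => xiN) (fun _ => v) (fun _ => u)
      contDiff_const contDiff_const contDiff_const p
    have hC := hΓmetric (fun _ => u) (fun _ => v) (fun _ => xiN)
      contDiff_const contDiff_const contDiff_const p
    simp only [fderiv_fun_const, Pi.zero_apply, ContinuousLinearMap.zero_apply, zero_add] at hA hB hC
    rw [hA, hB, hC, hΓsymm p xiN v, hΓsymm p u v, hΓsymm p u xiN,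
      gN_symm ε p xiN (Γ p v u), gN_symm ε p v (Γ p xiN u)]
    ring
  have k1 := key (1, 0, 0)
  have k2 := key (0, 1, 0)
  have k3 := key xiN
  simp only [gN_fderiv] at k1 k2 k3
  simp only [gN, etaN, xiN] at k1 k2 k3
  norm_num at k1 k2 k3
  have hηG := k3.resolve_left hε0
  have hexpneg : Real.exp (-2 * p.2.2) = (Real.exp (2 * p.2.2))⁻¹ := by
    rw [← Real.exp_neg]; ring_nf
  simp only [fderiv_fun_const, Pi.zero_apply, ContinuousLinearMap.zero_apply, zero_add]
  rw [hexpneg]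
  simp only [xiN, phiN, etaN, Prod.ext_iff, Prod.smul_mk, smul_eq_mul,
    Prod.fst_add, Prod.snd_add, Prod.fst_sub, Prod.snd_sub]
  refine ⟨?_, ?_, ?_⟩
  · field_simp
    linear_combination k1 / 2 - 2 * p.2.1 * ε * hηG
  · field_simp
    linear_combination k2 / 2
  · field_simp
    linear_combination Real.exp (2 * p.2.2) * hηG - p.2.1 * k1 + 4 * p.2.1 ^ 2 * ε * hηG
end
end

section
/- Let υ : I → ℝ³ be a smooth unit-speed Legendre curve in 𝒩³_ε and set ϑ(s) = g_{υ(s)}(∇_{υ'}υ'(s), φ_{υ(s)}(υ'(s))). Then ∇_{υ'}υ'(s) = −ε·ξ + ϑ(s)·φ_{υ(s)}(υ'(s)) for all s ∈ I, and consequently g_{υ(s)}(∇_{υ'}υ'(s), ∇_{υ'}υ'(s)) = ϑ(s)² + ε, so the geodesic curvature of υ is κ = √|ϑ² + ε|. -/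
noncomputable section

/-- The covariant derivative `∇_{υ'}υ' = υ'' + Γ_{υ}(υ', υ')` of the velocity along `υ`. -/
def covN (Γ : R3 → R3 →ₗ[ℝ] R3 →ₗ[ℝ] R3) (υ : ℝ → R3) (s : ℝ) : R3 :=
  deriv (deriv υ) s + Γ (υ s) (deriv υ s) (deriv υ s)

/-- The function `ϑ(s) = g_{υ(s)}(∇_{υ'}υ'(s), φ_{υ(s)}(υ'(s)))`. -/
def thetaN (ε : ℝ) (Γ : R3 → R3 →ₗ[ℝ] R3 →ₗ[ℝ] R3) (υ : ℝ → R3) (s : ℝ) : ℝ :=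
  gN ε (υ s) (covN Γ υ s) (phiN (υ s) (deriv υ s))

lemma fderiv_gN (ε : ℝ) (u v p w : R3) :
    fderiv ℝ (fun q : R3 => gN ε q u v) p w =
      2 * w.2.2 * Real.exp (2 * p.2.2) * (u.1 * v.1 + u.2.1 * v.2.1)
      + ε * (2 * w.2.1 * u.1) * etaN p v + ε * etaN p u * (2 * w.2.1 * v.1) := by
  have hy : HasFDerivAt (fun q : R3 => q.2.1)
      ((ContinuousLinearMap.fst ℝ ℝ ℝ).comp (ContinuousLinearMap.snd ℝ ℝ (ℝ × ℝ))) p :=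
    ((ContinuousLinearMap.fst ℝ ℝ ℝ).comp (ContinuousLinearMap.snd ℝ ℝ (ℝ × ℝ))).hasFDerivAt
  have hz : HasFDerivAt (fun q : R3 => q.2.2)
      ((ContinuousLinearMap.snd ℝ ℝ ℝ).comp (ContinuousLinearMap.snd ℝ ℝ (ℝ × ℝ))) p :=
    ((ContinuousLinearMap.snd ℝ ℝ ℝ).comp (ContinuousLinearMap.snd ℝ ℝ (ℝ × ℝ))).hasFDerivAt
  have H1 := ((hz.const_mul (2:ℝ)).exp).mul_const (u.1*v.1 + u.2.1*v.2.1)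
  have Hu := ((hy.const_mul (2:ℝ)).mul_const u.1).add_const u.2.2
  have Hv := ((hy.const_mul (2:ℝ)).mul_const v.1).add_const v.2.2
  have H := H1.add ((Hu.mul Hv).const_mul ε)
  have hfun : (fun q : R3 => gN ε q u v) = fun q : R3 =>
      Real.exp (2*q.2.2) * (u.1*v.1 + u.2.1*v.2.1) +
      ε * ((2*q.2.1*u.1 + u.2.2) * (2*q.2.1*v.1 + v.2.2)) := by
    funext q; simp only [gN, etaN]; ring
  rw [hfun]; erw [H.fderiv]
  simp [etaN, ContinuousLinearMap.smul_apply, ContinuousLinearMap.comp_apply, smul_eq_mul]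
  ring

/-- for a unit-speed Legendre curve `υ` in `𝒩³_ε`,
`∇_{υ'}υ' = −ε·ξ + ϑ·φ(υ')` and `g(∇_{υ'}υ', ∇_{υ'}υ') = ϑ² + ε`, so the geodesic
curvature of `υ` is `κ = √|ϑ² + ε|`. -/
theorem legendre_curvature_torsion_data_N (ε : ℝ) (hε : ε = 1 ∨ ε = -1)
    (Γ : R3 → R3 →ₗ[ℝ] R3 →ₗ[ℝ] R3)
    (hΓsmooth : ∀ u v : R3, ContDiff ℝ (⊤ : ℕ∞) fun p => Γ p u v)
    (hΓsymm : ∀ p u v : R3, Γ p u v = Γ p v u)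
    (hΓmetric : ∀ X Y Z : R3 → R3, ContDiff ℝ (⊤ : ℕ∞) X → ContDiff ℝ (⊤ : ℕ∞) Y → ContDiff ℝ (⊤ : ℕ∞) Z →
      ∀ p : R3, fderiv ℝ (fun q => gN ε q (Y q) (Z q)) p (X p) =
        gN ε p (fderiv ℝ Y p (X p) + Γ p (X p) (Y p)) (Z p) +
        gN ε p (Y p) (fderiv ℝ Z p (X p) + Γ p (X p) (Z p)))
    (I : Set ℝ) (hIopen : IsOpen I) (hIconn : I.OrdConnected)
    (υ : ℝ → R3) (hυ : ContDiff ℝ (⊤ : ℕ∞) υ)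
    (hLeg : ∀ s ∈ I, etaN (υ s) (deriv υ s) = 0)
    (hUnit : ∀ s ∈ I, gN ε (υ s) (deriv υ s) (deriv υ s) = 1) :
    ∀ s ∈ I,
      covN Γ υ s = (-ε) • xiN + thetaN ε Γ υ s • phiN (υ s) (deriv υ s) ∧
      gN ε (υ s) (covN Γ υ s) (covN Γ υ s) = thetaN ε Γ υ s ^ 2 + ε ∧
      Real.sqrt |gN ε (υ s) (covN Γ υ s) (covN Γ υ s)| =
        Real.sqrt |thetaN ε Γ υ s ^ 2 + ε| := by
  intro s hs
  have hε2 : ε * ε = 1 := by rcases hε with h | h <;> rw [h] <;> norm_num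
  have hυ' : Differentiable ℝ (deriv υ) :=
    ((contDiff_infty_iff_deriv.mp (hυ.of_le (by simp))).2).differentiable (by norm_num)
  have hdυ : ∀ r, HasDerivAt υ (deriv υ r) r := fun r =>
    (hυ.differentiable (by norm_num) r).hasDerivAt
  have hdT : ∀ r, HasDerivAt (deriv υ) (deriv (deriv υ) r) r := fun r =>
    (hυ' r).hasDerivAt
  set p := υ s with hp
  set t := deriv υ s with ht
  set A := deriv (deriv υ) s with hA
  set G := Γ p t t with hG
  set Hv := Γ p xiN t with hHv
  have hcx : HasDerivAt (fun r => (υ r).1) t.1 s := (hdυ s).fst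
  have hcy : HasDerivAt (fun r => (υ r).2.1) t.2.1 s := (hdυ s).snd.fst
  have hcz : HasDerivAt (fun r => (υ r).2.2) t.2.2 s := (hdυ s).snd.snd
  have hcx' : HasDerivAt (fun r => (deriv υ r).1) A.1 s := (hdT s).fst
  have hcy' : HasDerivAt (fun r => (deriv υ r).2.1) A.2.1 s := (hdT s).snd.fst
  have hcz' : HasDerivAt (fun r => (deriv υ r).2.2) A.2.2 s := (hdT s).snd.snd
  -- eta derivative
  have hηd : HasDerivAt (fun r => 2 * (υ r).2.1 * (deriv υ r).1 + (deriv υ r).2.2)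
      (2 * t.2.1 * t.1 + 2 * p.2.1 * A.1 + A.2.2) s := by
    exact (((hcy.const_mul 2).mul hcx').add hcz')
  have hη0 : HasDerivAt (fun r => 2 * (υ r).2.1 * (deriv υ r).1 + (deriv υ r).2.2) 0 s := by
    refine (hasDerivAt_const s (0:ℝ)).congr_of_eventuallyEq ?_
    filter_upwards [hIopen.mem_nhds hs] with r hr
    exact hLeg r hr
  have Ekey1 : 2 * t.2.1 * t.1 + 2 * p.2.1 * A.1 + A.2.2 = 0 := hηd.unique hη0
  -- unit speed derivative
  have hFd := ((((hcz.const_mul 2).exp).mul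
      ((hcx'.pow 2).add (hcy'.pow 2))).add ((hηd.pow 2).const_mul ε))
  have hF0 : HasDerivAt (fun r => Real.exp (2*(υ r).2.2) * ((deriv υ r).1^2 + (deriv υ r).2.1^2)
      + ε * (2 * (υ r).2.1 * (deriv υ r).1 + (deriv υ r).2.2)^2) 0 s := by
    refine (hasDerivAt_const s (1:ℝ)).congr_of_eventuallyEq ?_
    filter_upwards [hIopen.mem_nhds hs] with r hr
    have := hUnit r hr
    simp only [gN, etaN] at this
    linear_combination this
  have Ekey2 := hFd.unique hF0
  simp only [Pi.add_apply, Pi.pow_apply, ← ht] at Ekey2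
  -- basic scalar facts
  have heta : 2 * p.2.1 * t.1 + t.2.2 = 0 := by
    have := hLeg s hs; simpa [etaN] using this
  have hUnits : Real.exp (2*p.2.2) * (t.1*t.1 + t.2.1*t.2.1)
      + ε * (2*p.2.1*t.1 + t.2.2) * (2*p.2.1*t.1 + t.2.2) = 1 := by
    have := hUnit s hs; simpa [gN, etaN] using this
  have hu : Real.exp (2*p.2.2) * (t.1^2 + t.2.1^2) = 1 := by
    linear_combination hUnits - ε*(2*p.2.1*t.1 + t.2.2)*heta
  -- Christoffel facts
  have EqA := hΓmetric (fun _ => t) (fun _ => t) (fun _ => t)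
    contDiff_const contDiff_const contDiff_const p
  have EqB := hΓmetric (fun _ => t) (fun _ => t) (fun _ => xiN)
    contDiff_const contDiff_const contDiff_const p
  have EqC := hΓmetric (fun _ => xiN) (fun _ => t) (fun _ => t)
    contDiff_const contDiff_const contDiff_const p
  simp only [fderiv_fun_const, Pi.zero_apply, ContinuousLinearMap.zero_apply, zero_add,
    fderiv_gN] at EqA EqB EqC
  rw [hΓsymm p t xiN] at EqB
  simp only [gN, etaN, xiN] at EqA EqB EqC
  -- derived facts
  have hGt : Real.exp (2*p.2.2) * (G.1*t.1 + G.2.1*t.2.1) = t.2.2 := by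
    linear_combination (-1/2 : ℝ)*EqA + t.2.2*hu
      + (2*ε*t.1*t.2.1 - ε*(2*p.2.1*G.1 + G.2.2))*heta
  have hAt : Real.exp (2*p.2.2) * (A.1*t.1 + A.2.1*t.2.1) + t.2.2 = 0 := by
    linear_combination (1/2 : ℝ)*Ekey2 - t.2.2*hu - ε*(2*p.2.1*t.1 + t.2.2)*Ekey1
  have hX : Real.exp (2*p.2.2) * ((A.1+G.1)*t.1 + (A.2.1+G.2.1)*t.2.1) = 0 := by
    linear_combination hAt + hGt
  have hetaG : 2*p.2.1*G.1 + G.2.2 = 2*t.1*t.2.1 - ε := by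
    linear_combination (-ε)*EqB + (ε/2)*EqC
      - (2*p.2.1*G.1 + G.2.2 - 2*t.1*t.2.1)*hε2 - ε*hu
  -- theta
  set θ := thetaN ε Γ υ s with hθdef
  have hθ : θ = Real.exp (2*p.2.2) * ((A.1+G.1)*(-t.2.1) + (A.2.1+G.2.1)*t.1)
      + ε * (2*p.2.1*(A.1+G.1) + (A.2.2+G.2.2)) * (2*p.2.1*(-t.2.1) + 2*p.2.1*t.2.1) := by
    rw [hθdef]
    simp only [thetaN, covN, gN, etaN, phiN, ← hp, ← ht, ← hA, ← hG, Prod.fst_add, Prod.snd_add]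
  have c1 : A.1 + G.1 = θ * (-t.2.1) := by
    linear_combination (-(A.1+G.1))*hu + t.1*hX + t.2.1*hθ
  have c2 : A.2.1 + G.2.1 = θ * t.1 := by
    linear_combination (-(A.2.1+G.2.1))*hu + t.2.1*hX - t.1*hθ
  have c3 : A.2.2 + G.2.2 = -ε + θ * (2*p.2.1*t.2.1) := by
    linear_combination Ekey1 + hetaG - 2*p.2.1*((-(A.1+G.1))*hu + t.1*hX + t.2.1*hθ)
  -- part 1
  have part1 : covN Γ υ s = (-ε) • xiN + θ • phiN p t := by
    have hcov : covN Γ υ s = A + G := rfl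
    rw [hcov]
    refine Prod.ext ?_ (Prod.ext ?_ ?_)
    · simpa [xiN, phiN, Prod.fst_add] using c1
    · simpa [xiN, phiN] using c2
    · simpa [xiN, phiN] using c3
  have part2 : gN ε p (covN Γ υ s) (covN Γ υ s) = θ^2 + ε := by
    rw [part1]
    simp only [gN, etaN, xiN, phiN, Prod.fst_add, Prod.snd_add, Prod.smul_fst, Prod.smul_snd,
      smul_eq_mul]
    linear_combination θ^2*hu + ε*hε2
  exact ⟨part1, part2, by rw [part2]⟩
end
end

section
/- The curve υ¹ : ℝ → ℝ³, υ¹(s) = (1, s, 0), is a unit-speed Legendre curve in 𝒩³_ε; it satisfies ∇_{υ'}υ'(s) = −ε·ξ − 2s·φ_{υ¹(s)}((υ¹)'(s)), hence ϑ(s) := g(∇_{υ'}υ', φυ') = −2s and g(∇_{υ'}υ', ∇_{υ'}υ') = 4s² + ε, so its geodesic curvature is κ(s) = √|1 + 4εs²|. -/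
noncomputable section

/-- The curve `υ¹(s) = (1, s, 0)`. -/
def curve1 : ℝ → R3 := fun s => (1, s, 0)

lemma gN_fderiv_apply (ε : ℝ) (u v p w : R3) :
    fderiv ℝ (fun q : R3 => gN ε q u v) p w =
      2 * w.2.2 * Real.exp (2 * p.2.2) * (u.1 * v.1 + u.2.1 * v.2.1)
      + ε * (2 * w.2.1 * u.1) * (2 * p.2.1 * v.1 + v.2.2)
      + ε * (2 * p.2.1 * u.1 + u.2.2) * (2 * w.2.1 * v.1) := by
  have hy : HasFDerivAt (fun q : R3 => q.2.1)
      ((ContinuousLinearMap.fst ℝ ℝ ℝ).comp (ContinuousLinearMap.snd ℝ ℝ (ℝ × ℝ))) p :=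
    hasFDerivAt_fst.comp p hasFDerivAt_snd
  have hz : HasFDerivAt (fun q : R3 => q.2.2)
      ((ContinuousLinearMap.snd ℝ ℝ ℝ).comp (ContinuousLinearMap.snd ℝ ℝ (ℝ × ℝ))) p :=
    hasFDerivAt_snd.comp p hasFDerivAt_snd
  have he := ((hz.const_mul (2:ℝ)).exp).mul_const (u.1 * v.1 + u.2.1 * v.2.1)
  have hu := ((hy.const_mul (2:ℝ)).mul_const u.1).add_const u.2.2
  have hv := ((hy.const_mul (2:ℝ)).mul_const v.1).add_const v.2.2
  have hg := he.add ((hu.const_mul ε).mul hv)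
  have : (fun q : R3 => gN ε q u v) = fun q : R3 =>
      Real.exp (2 * q.2.2) * (u.1 * v.1 + u.2.1 * v.2.1)
      + ε * (2 * q.2.1 * u.1 + u.2.2) * (2 * q.2.1 * v.1 + v.2.2) := rfl
  rw [this, (show HasFDerivAt (fun q : R3 =>
      Real.exp (2 * q.2.2) * (u.1 * v.1 + u.2.1 * v.2.1)
      + ε * (2 * q.2.1 * u.1 + u.2.2) * (2 * q.2.1 * v.1 + v.2.2)) _ p from hg).fderiv]
  simp [ContinuousLinearMap.add_apply, ContinuousLinearMap.smul_apply,
    ContinuousLinearMap.comp_apply, smul_eq_mul]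
  ring

lemma deriv_curve1 : deriv curve1 = fun _ => ((0:ℝ), (1:ℝ), (0:ℝ)) := by
  funext t
  have h : HasDerivAt curve1 ((0:ℝ), (1:ℝ), (0:ℝ)) t :=
    HasDerivAt.prodMk (hasDerivAt_const t (1:ℝ)) (HasDerivAt.prodMk (hasDerivAt_id t) (hasDerivAt_const t (0:ℝ)))
  exact h.deriv

/-- the curve `υ¹(s) = (1, s, 0)` is a unit-speed Legendre curve in
`𝒩³_ε` with `∇_{υ'}υ' = −ε·ξ − 2s·φ(υ')`, `ϑ(s) = −2s`,
`g(∇_{υ'}υ', ∇_{υ'}υ') = 4s² + ε` and geodesic curvature `κ(s) = √|1 + 4εs²|`. -/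
theorem curve1_is_legendre_N (ε : ℝ) (hε : ε = 1 ∨ ε = -1)
    (Γ : R3 → R3 →ₗ[ℝ] R3 →ₗ[ℝ] R3)
    (hΓsmooth : ∀ u v : R3, ContDiff ℝ (⊤ : ℕ∞) fun p => Γ p u v)
    (hΓsymm : ∀ p u v : R3, Γ p u v = Γ p v u)
    (hΓmetric : ∀ X Y Z : R3 → R3, ContDiff ℝ (⊤ : ℕ∞) X → ContDiff ℝ (⊤ : ℕ∞) Y → ContDiff ℝ (⊤ : ℕ∞) Z →
      ∀ p : R3, fderiv ℝ (fun q => gN ε q (Y q) (Z q)) p (X p) =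
        gN ε p (fderiv ℝ Y p (X p) + Γ p (X p) (Y p)) (Z p) +
        gN ε p (Y p) (fderiv ℝ Z p (X p) + Γ p (X p) (Z p)))
    : ∀ s : ℝ,
      etaN (curve1 s) (deriv curve1 s) = 0 ∧
      gN ε (curve1 s) (deriv curve1 s) (deriv curve1 s) = 1 ∧
      covN Γ curve1 s = (-ε) • xiN - (2 * s) • phiN (curve1 s) (deriv curve1 s) ∧
      thetaN ε Γ curve1 s = -(2 * s) ∧
      gN ε (curve1 s) (covN Γ curve1 s) (covN Γ curve1 s) = 4 * s ^ 2 + ε ∧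
      Real.sqrt |gN ε (curve1 s) (covN Γ curve1 s) (covN Γ curve1 s)| =
        Real.sqrt |1 + 4 * ε * s ^ 2| := by
  intro s
  have hε2 : ε * ε = 1 := by rcases hε with h | h <;> rw [h] <;> norm_num
  set e2 : R3 := ((0:ℝ), (1:ℝ), (0:ℝ)) with he2
  set p : R3 := ((1:ℝ), s, (0:ℝ)) with hpdef
  have hcs : curve1 s = p := rfl
  have hdc : deriv curve1 s = e2 := by rw [deriv_curve1]
  -- metric compatibility for constant vector fields
  have key : ∀ z u v : R3, fderiv ℝ (fun q => gN ε q u v) p z =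
      gN ε p (Γ p z u) v + gN ε p u (Γ p z v) := by
    intro z u v
    have h := hΓmetric (fun _ => z) (fun _ => u) (fun _ => v)
      contDiff_const contDiff_const contDiff_const p
    simpa using h
  have gsymm : ∀ a b : R3, gN ε p a b = gN ε p b a := by
    intro a b; simp only [gN, etaN]; ring
  -- g_p(e2, Γ_p z e2) = z₃
  have h1 : ∀ z : R3, gN ε p e2 (Γ p z e2) = z.2.2 := by
    intro z
    have h := key z e2 e2
    rw [gN_fderiv_apply] at h
    rw [gsymm (Γ p z e2) e2] at h
    simp only [he2, hpdef] at h
    norm_num [Real.exp_zero] at h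
    linarith
  -- g_p(Γ_p e2 e2, z) = -z₃
  have h2 : ∀ z : R3, gN ε p (Γ p e2 e2) z = -z.2.2 := by
    intro z
    have h := key e2 e2 z
    rw [gN_fderiv_apply] at h
    rw [hΓsymm p e2 z, h1 z] at h
    simp only [he2, hpdef] at h
    norm_num at h
    linarith
  -- determine Γ_p e2 e2 componentwise
  set A : R3 := Γ p e2 e2 with hAdef
  have ha1 := h2 (1, 0, 0)
  have ha2 := h2 (0, 1, 0)
  have ha3 := h2 (0, 0, 1)
  simp only [gN, etaN, he2, hpdef] at ha1 ha2 ha3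
  norm_num [Real.exp_zero] at ha1 ha2 ha3
  have hA1 : A.1 = 2 * s := by linear_combination ha1 - 2 * s * ha3
  have hA3 : A.2.2 = -ε - 4 * s ^ 2 := by
    linear_combination ε * ha3 - (2 * s * A.1 + A.2.2) * hε2 - 2 * s * hA1
  have hAB : A = ((2 * s : ℝ), (0:ℝ), (-ε - 4 * s ^ 2 : ℝ)) := by
    have : A = (A.1, A.2.1, A.2.2) := rfl
    rw [this, hA1, ha2, hA3]
  -- covariant derivative
  have hdd : deriv (deriv curve1) s = 0 := by
    rw [deriv_curve1]; simp
  have hcov : covN Γ curve1 s = ((2 * s : ℝ), (0:ℝ), (-ε - 4 * s ^ 2 : ℝ)) := by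
    rw [covN, hdd, hcs, hdc, zero_add, ← hAdef, hAB]
  refine ⟨?_, ?_, ?_, ?_, ?_, ?_⟩
  · rw [hdc, hcs]; simp [etaN, he2, hpdef]
  · rw [hdc, hcs]; simp [gN, etaN, he2, hpdef, Real.exp_zero]
  · rw [hcov, hdc, hcs]
    simp only [xiN, phiN, he2, hpdef, Prod.smul_mk, Prod.mk_sub_mk, smul_eq_mul,
      Prod.mk.injEq]
    norm_num
    ring
  · rw [thetaN, hcov, hdc, hcs]
    simp only [gN, etaN, phiN, he2, hpdef]
    norm_num [Real.exp_zero]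
  · rw [hcov, hcs]
    simp only [gN, etaN, hpdef]
    norm_num [Real.exp_zero]
    linear_combination ε * hε2
  · rw [hcov, hcs]
    have hval : gN ε p ((2 * s : ℝ), (0:ℝ), (-ε - 4 * s ^ 2 : ℝ))
        ((2 * s : ℝ), (0:ℝ), (-ε - 4 * s ^ 2 : ℝ)) = 4 * s ^ 2 + ε := by
      simp only [gN, etaN, hpdef]
      norm_num [Real.exp_zero]
      linear_combination ε * hε2
    rw [hval]
    congr 1
    rcases hε with h | h <;> subst h
    · ring_nf
    · rw [show (4 * s ^ 2 + (-1:ℝ)) = -(1 + 4 * (-1) * s ^ 2) by ring, abs_neg]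
end
end

section
/- The curve υ² : (0,∞) → ℝ³, υ²(s) = (−ln s, 1/2, ln s), is a unit-speed Legendre curve in 𝒩³_ε; it satisfies ∇_{υ'}υ'(s) = −ε·ξ for all s > 0, hence ϑ(s) := g(∇_{υ'}υ', φυ') = 0 and g(∇_{υ'}υ', ∇_{υ'}υ') = ε, so its geodesic curvature is κ ≡ 1. -/
noncomputable section

/-- The curve `υ²(s) = (−ln s, 1/2, ln s)`, considered for `s > 0`. -/
def curve2 : ℝ → R3 := fun s => (-Real.log s, 1 / 2, Real.log s)

def P2 : R3 →L[ℝ] ℝ := (ContinuousLinearMap.fst ℝ ℝ ℝ).comp (ContinuousLinearMap.snd ℝ ℝ (ℝ × ℝ))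
def P3 : R3 →L[ℝ] ℝ := (ContinuousLinearMap.snd ℝ ℝ ℝ).comp (ContinuousLinearMap.snd ℝ ℝ (ℝ × ℝ))

def Dg (ε : ℝ) (p u v w : R3) : ℝ :=
  2 * u.2.2 * Real.exp (2 * p.2.2) * (v.1 * w.1 + v.2.1 * w.2.1)
  + 2 * ε * u.2.1 * (v.1 * etaN p w + w.1 * etaN p v)

lemma fderiv_gN_apply (ε : ℝ) (v w p u : R3) :
    fderiv ℝ (fun q => gN ε q v w) p u = Dg ε p u v w := by
  have h3 : HasFDerivAt (fun q : R3 => (2:ℝ) * q.2.2) ((2:ℝ) • P3) p :=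
    P3.hasFDerivAt.const_mul 2
  have hexp : HasFDerivAt (fun q : R3 => Real.exp (2 * q.2.2))
      (Real.exp (2 * p.2.2) • ((2:ℝ) • P3)) p :=
    (Real.hasDerivAt_exp (2 * p.2.2)).comp_hasFDerivAt (h₂ := Real.exp) p h3
  have hA := hexp.mul_const (v.1 * w.1 + v.2.1 * w.2.1)
  have hev : HasFDerivAt (fun q : R3 => 2 * q.2.1 * v.1 + v.2.2)
      (v.1 • ((2:ℝ) • P2)) p := ((P2.hasFDerivAt.const_mul 2).mul_const v.1).add_const v.2.2
  have hew : HasFDerivAt (fun q : R3 => 2 * q.2.1 * w.1 + w.2.2)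
      (w.1 • ((2:ℝ) • P2)) p := ((P2.hasFDerivAt.const_mul 2).mul_const w.1).add_const w.2.2
  have hB := (hev.const_mul ε).fun_mul hew
  have htot := hA.fun_add hB
  rw [show (fun q => gN ε q v w) = (fun q : R3 =>
      Real.exp (2 * q.2.2) * (v.1 * w.1 + v.2.1 * w.2.1)
      + ε * (2 * q.2.1 * v.1 + v.2.2) * (2 * q.2.1 * w.1 + w.2.2)) from rfl, htot.fderiv]
  simp [Dg, P2, P3, etaN, ContinuousLinearMap.smul_apply]
  ring

lemma koszul (ε : ℝ) (Γ : R3 → R3 →ₗ[ℝ] R3 →ₗ[ℝ] R3)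
    (hΓsymm : ∀ p u v : R3, Γ p u v = Γ p v u)
    (hΓmetric : ∀ X Y Z : R3 → R3, ContDiff ℝ (⊤ : ℕ∞) X → ContDiff ℝ (⊤ : ℕ∞) Y → ContDiff ℝ (⊤ : ℕ∞) Z →
      ∀ p : R3, fderiv ℝ (fun q => gN ε q (Y q) (Z q)) p (X p) =
        gN ε p (fderiv ℝ Y p (X p) + Γ p (X p) (Y p)) (Z p) +
        gN ε p (Y p) (fderiv ℝ Z p (X p) + Γ p (X p) (Z p)))
    (p u v w : R3) :
    2 * gN ε p (Γ p u v) w = Dg ε p u v w + Dg ε p v u w - Dg ε p w u v := by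
  have key : ∀ a b c : R3, Dg ε p a b c = gN ε p (Γ p a b) c + gN ε p b (Γ p a c) := by
    intro a b c
    have h := hΓmetric (fun _ => a) (fun _ => b) (fun _ => c)
      contDiff_const contDiff_const contDiff_const p
    simp only [fderiv_fun_const, Pi.zero_apply, ContinuousLinearMap.zero_apply, zero_add] at h
    rw [fderiv_gN_apply] at h
    exact h
  have h1 := key u v w
  have h2 := key v u w
  have h3 := key w u v
  rw [hΓsymm p v u] at h2
  rw [hΓsymm p w u] at h3
  rw [gN_symm ε p (Γ p u w) v, hΓsymm p w v] at h3
  linarith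

/-- the curve `υ²(s) = (−ln s, 1/2, ln s)`, `s > 0`, is a unit-speed
Legendre curve in `𝒩³_ε` with `∇_{υ'}υ' = −ε·ξ`, `ϑ = 0`,
`g(∇_{υ'}υ', ∇_{υ'}υ') = ε` and geodesic curvature `κ ≡ 1`. -/
theorem curve2_is_legendre_N (ε : ℝ) (hε : ε = 1 ∨ ε = -1)
    (Γ : R3 → R3 →ₗ[ℝ] R3 →ₗ[ℝ] R3)
    (hΓsmooth : ∀ u v : R3, ContDiff ℝ (⊤ : ℕ∞) fun p => Γ p u v)
    (hΓsymm : ∀ p u v : R3, Γ p u v = Γ p v u)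
    (hΓmetric : ∀ X Y Z : R3 → R3, ContDiff ℝ (⊤ : ℕ∞) X → ContDiff ℝ (⊤ : ℕ∞) Y → ContDiff ℝ (⊤ : ℕ∞) Z →
      ∀ p : R3, fderiv ℝ (fun q => gN ε q (Y q) (Z q)) p (X p) =
        gN ε p (fderiv ℝ Y p (X p) + Γ p (X p) (Y p)) (Z p) +
        gN ε p (Y p) (fderiv ℝ Z p (X p) + Γ p (X p) (Z p)))
    : ∀ s : ℝ, 0 < s →
      etaN (curve2 s) (deriv curve2 s) = 0 ∧
      gN ε (curve2 s) (deriv curve2 s) (deriv curve2 s) = 1 ∧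
      covN Γ curve2 s = (-ε) • xiN ∧
      thetaN ε Γ curve2 s = 0 ∧
      gN ε (curve2 s) (covN Γ curve2 s) (covN Γ curve2 s) = ε ∧
      Real.sqrt |gN ε (curve2 s) (covN Γ curve2 s) (covN Γ curve2 s)| = 1 := by
  intro s hs
  have hsne : s ≠ 0 := ne_of_gt hs
  have hε2 : ε * ε = 1 := by rcases hε with h | h <;> rw [h] <;> norm_num
  -- first derivative
  have hT : HasDerivAt curve2 (-s⁻¹, (0:ℝ), s⁻¹) s :=
    ((Real.hasDerivAt_log hsne).neg).prodMk
      ((hasDerivAt_const s ((1:ℝ)/2)).prodMk (Real.hasDerivAt_log hsne))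
  have hdT : deriv curve2 s = (-s⁻¹, (0:ℝ), s⁻¹) := hT.deriv
  -- second derivative
  have hev : deriv curve2 =ᶠ[nhds s] fun t => (-t⁻¹, (0:ℝ), t⁻¹) := by
    filter_upwards [Ioi_mem_nhds hs] with t ht
    exact (((Real.hasDerivAt_log (ne_of_gt ht)).neg).prodMk
      ((hasDerivAt_const t ((1:ℝ)/2)).prodMk (Real.hasDerivAt_log (ne_of_gt ht)))).deriv
  have hdd : deriv (deriv curve2) s = ((s*s)⁻¹, (0:ℝ), -(s*s)⁻¹) := by
    rw [hev.deriv_eq]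
    have h := (((hasDerivAt_inv hsne).fun_neg).prodMk
      ((hasDerivAt_const s ((0:ℝ))).prodMk (hasDerivAt_inv hsne))).deriv
    rw [h]
    norm_num [sq]
  -- point facts
  have hexp2 : Real.exp (2 * (curve2 s).2.2) = s * s := by
    show Real.exp (2 * Real.log s) = s * s
    rw [two_mul, Real.exp_add, Real.exp_log hs]
  have hy : (curve2 s).2.1 = 1/2 := rfl
  set T : R3 := (-s⁻¹, (0:ℝ), s⁻¹) with hTdef
  -- Koszul equations
  have k1 := koszul ε Γ hΓsymm hΓmetric (curve2 s) T T ((1:ℝ),(0:ℝ),(0:ℝ))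
  have k2 := koszul ε Γ hΓsymm hΓmetric (curve2 s) T T ((0:ℝ),(1:ℝ),(0:ℝ))
  have k3 := koszul ε Γ hΓsymm hΓmetric (curve2 s) T T ((0:ℝ),(0:ℝ),(1:ℝ))
  set G : R3 := Γ (curve2 s) T T with hGdef
  simp only [Dg, gN, etaN, hexp2, hy, hTdef] at k1 k2 k3
  norm_num at k1 k2 k3
  -- solve for G
  have hss : s * s ≠ 0 := mul_ne_zero hsne hsne
  have e1 : s⁻¹ * (s * s) * s⁻¹ = 1 := by field_simp
  have e2 : (s * s) * (s⁻¹ * s⁻¹) = 1 := by field_simp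
  have h0 : (s * s) * (s * s)⁻¹ = 1 := mul_inv_cancel₀ hss
  have hb : G.2.1 = 0 := by
    rcases k2 with h | h
    · exact absurd h hsne
    · exact h
  have h3' : ε * (G.1 + G.2.2) = -1 := by linear_combination k3 / 2 - e2
  have h1 : s * s * G.1 = -1 := by linear_combination k1 / 2 - h3' - 2 * e1
  have ha : G.1 = -(s*s)⁻¹ := by linear_combination (s * s)⁻¹ * h1 - G.1 * h0
  have hS : G.1 + G.2.2 = -ε := by
    linear_combination ε * h3' - (G.1 + G.2.2) * hε2
  have hc : G.2.2 = (s*s)⁻¹ - ε := by rw [ha] at hS; linarith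
  have hG : G = (-(s*s)⁻¹, (0:ℝ), (s*s)⁻¹ - ε) :=
    Prod.ext ha (Prod.ext hb hc)
  -- covariant derivative
  have hcov : covN Γ curve2 s = (-ε) • xiN := by
    rw [covN, hdd, hdT, ← hGdef, hG]
    simp [xiN, Prod.ext_iff]
    ring
  refine ⟨?_, ?_, hcov, ?_, ?_, ?_⟩
  · rw [hdT]; show 2 * (1/2) * (-s⁻¹) + s⁻¹ = 0; ring
  · rw [hdT]
    show Real.exp (2 * (curve2 s).2.2) * (-s⁻¹ * -s⁻¹ + 0 * 0)
      + ε * (2 * (1/2) * (-s⁻¹) + s⁻¹) * (2 * (1/2) * (-s⁻¹) + s⁻¹) = 1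
    rw [hexp2]; field_simp; ring
  · rw [thetaN, hcov, hdT]
    show Real.exp (2 * (curve2 s).2.2) * ((-ε) * 0 * (-(0:ℝ)) + (-ε) * 0 * (-s⁻¹))
      + ε * (2 * (1/2) * ((-ε) * 0) + (-ε) * 1) * (2 * (1/2) * (-(0:ℝ)) + 2 * (1/2) * 0) = 0
    ring
  · rw [hcov]
    show Real.exp (2 * (curve2 s).2.2) * ((-ε) * 0 * ((-ε) * 0) + (-ε) * 0 * ((-ε) * 0))
      + ε * (2 * (1/2) * ((-ε) * 0) + (-ε) * 1) * (2 * (1/2) * ((-ε) * 0) + (-ε) * 1) = ε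
    linear_combination ε * hε2
  · rw [hcov]
    have hgg : gN ε (curve2 s) ((-ε) • xiN) ((-ε) • xiN) = ε := by
      show Real.exp (2 * (curve2 s).2.2) * ((-ε) * 0 * ((-ε) * 0) + (-ε) * 0 * ((-ε) * 0))
        + ε * (2 * (1/2) * ((-ε) * 0) + (-ε) * 1) * (2 * (1/2) * ((-ε) * 0) + (-ε) * 1) = ε
      linear_combination ε * hε2
    rw [hgg]
    rcases hε with h | h <;> rw [h] <;> norm_num
end
end
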